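/- arXiv:2411.03077 — 6 statements merged into one kernel-verified Lean document; each statement's English description precedes it below -/
import Mathlib

section
/- For all n ≥ 0, d_2(n) is odd if n = m(3m+1)/2 for some integer m (possibly negative), and even otherwise. -/
/-!
The generating function of `d2` is `∏ₖ (1 - Xᵏ)⁻¹ · ∏ₖ (1 + X²ᵏ)`. Modulo 2,
`1 + X²ᵏ = (1 - Xᵏ)²`, so it collapses to `∏ₖ (1 - Xᵏ)`. By Euler's pentagonal number theorem this is `∑ₘ ±X^(m(3m+1)/2)`, whence
`d2 n` is odd exactly at the generalized pentagonal numbers.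
-/

/-- Number of overpartitions of `n` wherein only even parts may be overlined. -/
def d2 (n : ℕ) : ℕ :=
  ∑ m ∈ Finset.range (n + 1),
    Fintype.card (Nat.Partition m) *
      Fintype.card {ν : Nat.Partition (n - m) // ν.parts.Nodup ∧ ∀ x ∈ ν.parts, Even x}

open Finset PowerSeries PowerSeries.WithPiTopology

theorem PowerSeries.one_add_X_pow_two_mul_eq_sq {R : Type*} [CommRing R] [CharP R 2] (k : ℕ) :
    (1 + X ^ (2 * k) : R⟦X⟧) = (1 - X ^ k) ^ 2 := by
  have h2 : (2 : R⟦X⟧) = 0 := by rw [← map_ofNat C 2, CharTwo.two_eq_zero, map_zero]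
  linear_combination X ^ k * h2

theorem mem_range_pentagonal_iff (n : ℕ) :
    n ∈ Set.range pentagonal ↔ ∃ m : ℤ, (n : ℤ) = m * (3 * m + 1) / 2 := by
  refine ⟨fun ⟨k, hk⟩ ↦ ⟨-k, ?_⟩, fun ⟨m, hm⟩ ↦ ⟨-m, ?_⟩⟩
  · rw [← hk, natCast_pentagonal]; ring_nf
  · rw [← Nat.cast_inj (R := ℤ), natCast_pentagonal, hm]; ring_nf

namespace Nat.Partition

variable (R : Type*)

theorem hasProd_powerSeriesMk_card [CommSemiring R] [TopologicalSpace R] [T2Space R]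
    [IsTopologicalSemiring R] :
    HasProd (fun i ↦ ∑' j : ℕ, (X : R⟦X⟧) ^ ((i + 1) * j))
      (PowerSeries.mk fun n ↦ (Fintype.card n.Partition : R)) := by
  simpa [restricted] using hasProd_powerSeriesMk_card_restricted R (fun _ ↦ True)

theorem powerSeriesMk_card_mul_pentagonalSeries [CommRing R] :
    (PowerSeries.mk fun n ↦ (Fintype.card n.Partition : R)) * pentagonalSeries R = 1 := by
  let _ : TopologicalSpace R := ⊥
  have _ : DiscreteTopology R := ⟨rfl⟩
  have hfactor (i : ℕ) : (∑' j, (X : R⟦X⟧) ^ ((i + 1) * j)) * (1 - X ^ (i + 1)) = 1 := by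
    simp_rw [pow_mul]
    exact tsum_pow_mul_one_sub_of_constantCoeff_eq_zero (by simp)
  refine ((hasProd_powerSeriesMk_card R).mul (hasProd_one_sub_X_pow R)).unique ?_
  simpa only [hfactor] using hasProd_one

theorem hasProd_powerSeriesMk_card_nodup_even [CommSemiring R] [TopologicalSpace R]
    [T2Space R] :
    HasProd (fun k ↦ 1 + (X : R⟦X⟧) ^ (2 * (k + 1)))
      (PowerSeries.mk fun n ↦
        (Fintype.card {ν : n.Partition // ν.parts.Nodup ∧ ∀ x ∈ ν.parts, Even x} : R)) := by
  classical
  have h := hasProd_genFun (R := R) fun i c ↦ if c = 1 ∧ Even i then 1 else 0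
  have hcoeff : genFun (fun i c ↦ if c = 1 ∧ Even i then (1 : R) else 0) = PowerSeries.mk fun n ↦
        (Fintype.card {ν : n.Partition // ν.parts.Nodup ∧ ∀ x ∈ ν.parts, Even x} : R) := by
    ext n
    simp_rw [coeff_genFun, coeff_mk, Finsupp.prod, prod_boole, Fintype.card_subtype]
    simp [Multiset.nodup_iff_count_eq_one, imp_and, forall_and]
  have hfactor (i : ℕ) : 1 + ∑' j, (if j + 1 = 1 ∧ Even (i + 1) then (1 : R) else 0) •
      (X : R⟦X⟧) ^ ((i + 1) * (j + 1)) = 1 + if Even (i + 1) then X ^ (i + 1) else 0 := by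
    rw [tsum_eq_single 0 (fun j hj ↦ by simp [hj])]
    split_ifs <;> simp_all
  simp_rw [hfactor, hcoeff] at h
  have hodd : Function.Injective (fun k : ℕ ↦ 2 * k + 1) := fun a b hab ↦ by
    simp only at hab; omega
  rw [← hodd.hasProd_iff ?_] at h
  · convert h using 2 with k
    simp [show 2 * k + 1 + 1 = 2 * (k + 1) by ring]
  · intro i hi
    have : ¬ Even (i + 1) := fun ⟨k, hk⟩ ↦ hi ⟨k - 1, by simp only; omega⟩
    simp [this]

theorem powerSeriesMk_card_nodup_even_eq_sq [CommRing R] [CharP R 2] :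
    (PowerSeries.mk fun n ↦
        (Fintype.card {ν : n.Partition // ν.parts.Nodup ∧ ∀ x ∈ ν.parts, Even x} : R)) =
      pentagonalSeries R ^ 2 := by
  let _ : TopologicalSpace R := ⊥
  have _ : DiscreteTopology R := ⟨rfl⟩
  refine (hasProd_powerSeriesMk_card_nodup_even R).unique ?_
  simpa only [one_add_X_pow_two_mul_eq_sq] using (hasProd_one_sub_X_pow R).pow 2

end Nat.Partition

theorem powerSeriesMk_d2 (R : Type*) [CommSemiring R] :
    (PowerSeries.mk fun n ↦ (d2 n : R)) =
      (PowerSeries.mk fun n ↦ (Fintype.card n.Partition : R)) *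
        PowerSeries.mk fun n ↦
          (Fintype.card {ν : n.Partition // ν.parts.Nodup ∧ ∀ x ∈ ν.parts, Even x} : R) := by
  ext n
  simp [d2, coeff_mul, Finset.Nat.sum_antidiagonal_eq_sum_range_succ_mk]

theorem powerSeriesMk_d2_eq_pentagonalSeries (R : Type*) [CommRing R] [CharP R 2] :
    (PowerSeries.mk fun n ↦ (d2 n : R)) = pentagonalSeries R := by
  rw [powerSeriesMk_d2, Nat.Partition.powerSeriesMk_card_nodup_even_eq_sq, sq, ← mul_assoc,
    Nat.Partition.powerSeriesMk_card_mul_pentagonalSeries, one_mul]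

/-- `d_2(n)` is odd exactly when `n` is a generalized pentagonal number
`m(3m+1)/2` for some integer `m`, and even otherwise. -/
theorem d2_parity (n : ℕ) :
    (Odd (d2 n) ↔ ∃ m : ℤ, (n : ℤ) = m * (3 * m + 1) / 2) := by
  have hcoeff : (d2 n : ZMod 2) = (pentagonalSeries (ZMod 2)).coeff n := by
    rw [← powerSeriesMk_d2_eq_pentagonalSeries, coeff_mk]
  rw [← ZMod.natCast_ne_zero_iff_odd, hcoeff, ne_eq, coeff_pentagonalSeries_eq_zero_iff, not_not,
    mem_range_pentagonal_iff]
end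

section
/- As formal power series, ∏_{i≥1}(1−q^i) = ∑_{j=−∞}^{∞} (−1)^j q^{j(3j+1)/2}. -/
/-!
Mathlib proves the pentagonal number theorem in the form that, for every `n`, the coefficient of
`X ^ n` in `∏ i ∈ range N, (1 - X ^ (i + 1))` equals that of `pentagonalSeries` for all large `N`.
The factors with `i ≥ n` are `≡ 1 mod X ^ (n + 1)`, so `N = n` already gives that coefficient.
On the other side, `j(3j+1)/2` is the generalized pentagonal number `pentagonal (-j)`, which is at
least `|j|`; hence the sum over `-n ≤ j ≤ n` contains every exponent equal to `n`.
-/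

open PowerSeries Finset

theorem dvd_prod_sub_one {R ι : Type*} [CommRing R] {a : R} {s : Finset ι} {f : ι → R}
    (h : ∀ i ∈ s, a ∣ f i - 1) : a ∣ ∏ i ∈ s, f i - 1 := by
  simp only [← Ideal.mem_span_singleton, ← Ideal.Quotient.eq, map_prod, map_one] at h ⊢
  exact prod_eq_one h

theorem Finset.prod_Icc_one_eq_prod_range {M : Type*} [CommMonoid M] (f : ℕ → M) (n : ℕ) :
    ∏ i ∈ Icc 1 n, f i = ∏ i ∈ range n, f (i + 1) := by
  rw [← Ico_add_one_right_eq_Icc, prod_Ico_eq_prod_range, Nat.add_sub_cancel]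
  simp only [add_comm 1]

theorem natAbs_le_pentagonal (k : ℤ) : k.natAbs ≤ pentagonal k := by
  have := two_mul_natCast_pentagonal k
  zify
  rcases abs_cases k with ⟨hk, _⟩ | ⟨hk, _⟩ <;> rw [hk] <;> nlinarith

theorem natCast_eq_mul_three_mul_add_one_div_two_iff {n : ℕ} {j : ℤ} :
    (n : ℤ) = j * (3 * j + 1) / 2 ↔ pentagonal (-j) = n := by
  rw [show j * (3 * j + 1) = -j * (3 * -j - 1) by ring, ← natCast_pentagonal, Nat.cast_inj,
    eq_comm]

namespace PowerSeries

variable {R : Type*} [CommRing R]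

theorem coeff_mul_of_X_pow_dvd_sub_one {n : ℕ} {f g : R⟦X⟧} (hg : X ^ (n + 1) ∣ g - 1) :
    coeff n (f * g) = coeff n f := by
  have : coeff n (f * (g - 1)) = 0 :=
    X_pow_dvd_iff.mp (dvd_mul_of_dvd_right hg f) n n.lt_succ_self
  rwa [mul_sub_one, map_sub, sub_eq_zero] at this

theorem coeff_prod_one_sub_X_pow_of_le {n N : ℕ} (hN : n ≤ N) :
    coeff n (∏ i ∈ range N, (1 - X ^ (i + 1) : R⟦X⟧)) =
      coeff n (∏ i ∈ range n, (1 - X ^ (i + 1) : R⟦X⟧)) := by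
  rw [← prod_range_mul_prod_Ico _ hN]
  refine coeff_mul_of_X_pow_dvd_sub_one (dvd_prod_sub_one fun i hi => ?_)
  rw [sub_sub_cancel_left, dvd_neg]
  exact pow_dvd_pow X (by simp only [mem_Ico] at hi; omega)

theorem coeff_prod_one_sub_X_pow_eq_coeff_pentagonalSeries (n : ℕ) :
    coeff n (∏ i ∈ range n, (1 - X ^ (i + 1) : R⟦X⟧)) = coeff n (pentagonalSeries R) := by
  obtain ⟨N, hN, hnN⟩ := ((Filter.tendsto_finset_range.eventually
    (coeff_prod_one_sub_X_pow_eventually_eq R n)).and (Filter.eventually_ge_atTop n)).exists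
  rw [← hN, coeff_prod_one_sub_X_pow_of_le hnN]

theorem coeff_pentagonalSeries_eq_sum_Icc (n : ℕ) :
    coeff n (pentagonalSeries R) = ∑ j ∈ Icc (-(n : ℤ)) n,
      if (n : ℤ) = j * (3 * j + 1) / 2 then (-1) ^ j.natAbs else 0 := by
  simp only [natCast_eq_mul_three_mul_add_one_div_two_iff]
  by_cases hn : n ∈ Set.range pentagonal
  · obtain ⟨k, rfl⟩ := hn
    rw [coeff_pentagonalSeries_pentagonal, sum_eq_single_of_mem (-k), if_pos (by rw [neg_neg]),
      Int.coe_negOnePow, Int.natAbs_neg]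
    · have := natAbs_le_pentagonal k
      simp only [mem_Icc]
      omega
    · intro j _ hj
      rw [if_neg fun h => hj (by rw [← pentagonal_injective h, neg_neg])]
  · rw [coeff_pentagonalSeries_eq_zero R hn]
    exact (sum_eq_zero fun j _ => if_neg fun h => hn ⟨-j, h⟩).symm

end PowerSeries

/-- Euler's pentagonal number theorem
`∏_{i≥1}(1−q^i) = ∑_{j∈ℤ} (−1)^j q^{j(3j+1)/2}`, stated coefficientwise:
the coefficient of `q^n` in the infinite product agrees with that of the finite
product over `1 ≤ i ≤ n`, and all integers `j` with `j(3j+1)/2 = n` satisfy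
`-n ≤ j ≤ n`. -/
theorem pentagonal_number_theorem :
    ∀ n : ℕ,
      PowerSeries.coeff (R := ℤ) n (∏ i ∈ Finset.Icc 1 n, (1 - (PowerSeries.X : PowerSeries ℤ) ^ i)) =
        ∑ j ∈ Finset.Icc (-(n : ℤ)) (n : ℤ),
          if (n : ℤ) = j * (3 * j + 1) / 2 then (-1) ^ j.natAbs else 0 := by
  intro n
  rw [prod_Icc_one_eq_prod_range, coeff_prod_one_sub_X_pow_eq_coeff_pentagonalSeries,
    coeff_pentagonalSeries_eq_sum_Icc]
end

section
/- For every n ≥ 2, the number of partitions of n of even length that are not partitions into distinct odd parts equals the number of partitions of n of odd length that are not partitions into distinct odd parts; i.e., r^e(n) = r^o(n). -/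
namespace VLaux

/-- The "violation" predicate: `v` is a repeated part, or `2*v` occurs with odd
multiplicity (in particular `λ` has an even part `2*v` outside pairs). -/
def P (s : Multiset ℕ) (v : ℕ) : Prop := 2 ≤ s.count v ∨ Odd (s.count (2 * v))

instance (s : Multiset ℕ) (v : ℕ) : Decidable (P s v) :=
  inferInstanceAs (Decidable (_ ∨ _))

/-- The finite set of violations. -/
def F (s : Multiset ℕ) : Finset ℕ := (Finset.range (s.sum + 1)).filter (P s)

lemma mem_F {s : Multiset ℕ} {v : ℕ} : v ∈ F s ↔ P s v := by
  simp only [F, Finset.mem_filter, Finset.mem_range, and_iff_right_iff_imp]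
  intro h
  rcases h with h | h
  · have hv : v ∈ s := by rw [← Multiset.count_pos]; omega
    have := Multiset.single_le_sum (fun x _ => Nat.zero_le x) v hv
    omega
  · have hv : 2 * v ∈ s := by
      rw [← Multiset.count_pos]
      rcases h with ⟨k, hk⟩; omega
    have := Multiset.single_le_sum (fun x _ => Nat.zero_le x) _ hv
    omega

/-- van Leeuwen's toggle on the multiset of parts. -/
def toggleParts (s : Multiset ℕ) : Multiset ℕ :=
  if h : (F s).Nonempty then
    if Odd (s.count (2 * (F s).max' h)) then
      (F s).max' h ::ₘ (F s).max' h ::ₘ s.erase (2 * (F s).max' h)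
    else 2 * (F s).max' h ::ₘ (s.erase ((F s).max' h)).erase ((F s).max' h)
  else s

section basic
variable {s : Multiset ℕ}

lemma toggle_of_empty (h : ¬ (F s).Nonempty) : toggleParts s = s := by
  rw [toggleParts, dif_neg h]

lemma P_max' (h : (F s).Nonempty) : P s ((F s).max' h) := mem_F.1 ((F s).max'_mem h)

lemma not_P_of_gt (h : (F s).Nonempty) {v : ℕ} (hv : (F s).max' h < v) :
    s.count v ≤ 1 ∧ Even (s.count (2 * v)) := by
  by_contra hc
  have hp : P s v := by
    rw [P, Nat.even_iff, Nat.odd_iff] at *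
    omega
  exact absurd (Finset.le_max' _ v (mem_F.2 hp)) (not_le.2 hv)

lemma max'_pos (hpos : ∀ x ∈ s, 0 < x) (h : (F s).Nonempty) : 0 < (F s).max' h := by
  rcases P_max' h with hp | hp
  · have hv : (F s).max' h ∈ s := by rw [← Multiset.count_pos]; omega
    exact hpos _ hv
  · obtain ⟨k, hk⟩ := hp
    have hv : 2 * (F s).max' h ∈ s := Multiset.count_pos.1 (by omega)
    have := hpos _ hv; omega

end basic

section main

/-- All the facts we need about one toggle step. -/
lemma main_step {s : Multiset ℕ} (hpos : ∀ x ∈ s, 0 < x) (h : (F s).Nonempty) :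
    (∀ x ∈ toggleParts s, 0 < x) ∧ (toggleParts s).sum = s.sum ∧
      (F (toggleParts s)).Nonempty ∧ toggleParts (toggleParts s) = s ∧
      (toggleParts s).card % 2 = (s.card + 1) % 2 := by
  obtain ⟨m, hmdef⟩ : ∃ m, (F s).max' h = m := ⟨_, rfl⟩
  have hm0 : 0 < m := hmdef ▸ max'_pos hpos h
  have hPm : P s m := hmdef ▸ P_max' h
  have hgt : ∀ v, m < v → s.count v ≤ 1 ∧ Even (s.count (2 * v)) := by
    intro v hv
    exact not_P_of_gt h (by rw [hmdef]; exact hv)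
  have h2m : m < 2 * m := by omega
  have hn2m := hgt _ h2m
  by_cases hodd : Odd (s.count (2 * m))
  case pos =>
    -- split `2*m` into `m + m`
    have hc2m : s.count (2 * m) = 1 := by
      rw [Nat.odd_iff] at hodd; omega
    have hmem : 2 * m ∈ s := by rw [← Multiset.count_pos]; omega
    have e1 : toggleParts s = m ::ₘ m ::ₘ s.erase (2 * m) := by
      rw [toggleParts, dif_pos h, hmdef, if_pos hodd]
    set t := m ::ₘ m ::ₘ s.erase (2 * m) with ht
    -- counts of t
    have hne : m ≠ 2 * m := by omega
    have htm : t.count m = s.count m + 2 := by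
      rw [ht, Multiset.count_cons_self, Multiset.count_cons_self,
        Multiset.count_erase_of_ne hne]
    have ht2m : t.count (2 * m) = 0 := by
      rw [ht, Multiset.count_cons_of_ne (Ne.symm hne), Multiset.count_cons_of_ne (Ne.symm hne),
        Multiset.count_erase_self]
      omega
    have htv : ∀ v, v ≠ m → v ≠ 2 * m → t.count v = s.count v := by
      intro v hv1 hv2
      rw [ht, Multiset.count_cons_of_ne hv1, Multiset.count_cons_of_ne hv1,
        Multiset.count_erase_of_ne hv2]
    have hPtm : P t m := Or.inl (by omega)
    have hFt : (F t).Nonempty := ⟨m, mem_F.2 hPtm⟩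
    have hmaxle : ∀ v ∈ F t, v ≤ m := by
      intro v hv
      by_contra hlt
      push_neg at hlt
      have hs := hgt _ hlt
      rcases mem_F.1 hv with hp | hp
      · rcases eq_or_ne v (2 * m) with rfl | hv2
        · omega
        · rw [htv v (by omega) hv2] at hp; omega
      · have : t.count (2 * v) = s.count (2 * v) := htv _ (by omega) (by omega)
        rw [this] at hp
        rw [Nat.odd_iff] at hp
        rw [Nat.even_iff] at hs
        omega
    have hmaxt : (F t).max' hFt = m :=
      le_antisymm (Finset.max'_le _ _ _ hmaxle) (Finset.le_max' _ m (mem_F.2 hPtm))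
    have e2 : toggleParts t = s := by
      rw [toggleParts, dif_pos hFt, hmaxt, if_neg (by rw [ht2m]; decide),
        Multiset.erase_cons_head, Multiset.erase_cons_head, Multiset.cons_erase hmem]
    refine ⟨?_, ?_, ?_, ?_, ?_⟩
    · rw [e1]
      intro x hx
      rcases Multiset.mem_cons.1 hx with rfl | hx
      · exact hm0
      rcases Multiset.mem_cons.1 hx with rfl | hx
      · exact hm0
      · exact hpos _ (Multiset.mem_of_mem_erase hx)
    · rw [e1]
      have := Multiset.cons_erase hmem
      calc (m ::ₘ m ::ₘ s.erase (2 * m)).sum = 2 * m + (s.erase (2 * m)).sum := by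
            rw [Multiset.sum_cons, Multiset.sum_cons]; ring
        _ = (2 * m ::ₘ s.erase (2 * m)).sum := by rw [Multiset.sum_cons]
        _ = s.sum := by rw [this]
    · rw [e1]; exact hFt
    · rw [e1]; exact e2
    · have hcard : s.card = (s.erase (2 * m)).card + 1 := by
        conv_lhs => rw [← Multiset.cons_erase hmem]
        rw [Multiset.card_cons]
      rw [e1, ht]
      simp only [Multiset.card_cons]
      omega
  case neg =>
    -- merge `m + m` into `2*m`
    have hcm : 2 ≤ s.count m := by
      rcases hPm with hp | hp
      · exact hp
      · exact absurd hp hodd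
    have hc2m : s.count (2 * m) = 0 := by
      rw [Nat.odd_iff] at hodd; omega
    have hmem : m ∈ s := by rw [← Multiset.count_pos]; omega
    have hmem2 : m ∈ s.erase m := by
      rw [← Multiset.count_pos, Multiset.count_erase_self]; omega
    have e1 : toggleParts s = 2 * m ::ₘ (s.erase m).erase m := by
      rw [toggleParts, dif_pos h, hmdef, if_neg hodd]
    set t := 2 * m ::ₘ (s.erase m).erase m with ht
    have hne : m ≠ 2 * m := by omega
    have htm : t.count m = s.count m - 2 := by
      rw [ht, Multiset.count_cons_of_ne hne, Multiset.count_erase_self,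
        Multiset.count_erase_self]
      omega
    have ht2m : t.count (2 * m) = 1 := by
      rw [ht, Multiset.count_cons_self, Multiset.count_erase_of_ne (Ne.symm hne),
        Multiset.count_erase_of_ne (Ne.symm hne)]
      omega
    have htv : ∀ v, v ≠ m → v ≠ 2 * m → t.count v = s.count v := by
      intro v hv1 hv2
      rw [ht, Multiset.count_cons_of_ne hv2, Multiset.count_erase_of_ne hv1,
        Multiset.count_erase_of_ne hv1]
    have hPtm : P t m := Or.inr (by rw [ht2m]; decide)
    have hFt : (F t).Nonempty := ⟨m, mem_F.2 hPtm⟩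
    have hmaxle : ∀ v ∈ F t, v ≤ m := by
      intro v hv
      by_contra hlt
      push_neg at hlt
      have hs := hgt _ hlt
      rcases mem_F.1 hv with hp | hp
      · rcases eq_or_ne v (2 * m) with rfl | hv2
        · omega
        · rw [htv v (by omega) hv2] at hp; omega
      · have : t.count (2 * v) = s.count (2 * v) := htv _ (by omega) (by omega)
        rw [this] at hp
        rw [Nat.odd_iff] at hp
        rw [Nat.even_iff] at hs
        omega
    have hmaxt : (F t).max' hFt = m :=
      le_antisymm (Finset.max'_le _ _ _ hmaxle) (Finset.le_max' _ m (mem_F.2 hPtm))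
    have e2 : toggleParts t = s := by
      rw [toggleParts, dif_pos hFt, hmaxt, if_pos (by rw [ht2m]; decide),
        Multiset.erase_cons_head, Multiset.cons_erase hmem2, Multiset.cons_erase hmem]
    refine ⟨?_, ?_, ?_, ?_, ?_⟩
    · rw [e1]
      intro x hx
      rcases Multiset.mem_cons.1 hx with rfl | hx
      · omega
      · exact hpos _ (Multiset.mem_of_mem_erase (Multiset.mem_of_mem_erase hx))
    · rw [e1]
      have h1 : m ::ₘ s.erase m = s := Multiset.cons_erase hmem
      have h2 : m ::ₘ (s.erase m).erase m = s.erase m := Multiset.cons_erase hmem2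
      have : s.sum = m + (m + ((s.erase m).erase m).sum) := by
        conv_lhs => rw [← h1, ← h2]
        rw [Multiset.sum_cons, Multiset.sum_cons]
      rw [Multiset.sum_cons]
      omega
    · rw [e1]; exact hFt
    · rw [e1]; exact e2
    · have hcard : s.card = ((s.erase m).erase m).card + 2 := by
        conv_lhs => rw [← Multiset.cons_erase hmem]
        rw [Multiset.card_cons]
        conv_lhs => rw [← Multiset.cons_erase hmem2]
        rw [Multiset.card_cons]
      rw [e1, ht]
      simp only [Multiset.card_cons]
      omega

end main

lemma F_nonempty_iff {s : Multiset ℕ} :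
    (F s).Nonempty ↔ ¬(s.Nodup ∧ ∀ x ∈ s, Odd x) := by
  constructor
  · rintro ⟨v, hv⟩ ⟨hnd, hall⟩
    rcases mem_F.1 hv with hp | hp
    · rw [Multiset.nodup_iff_count_le_one] at hnd
      have := hnd v; omega
    · obtain ⟨k, hk⟩ := hp
      have hv2 : 2 * v ∈ s := Multiset.count_pos.1 (by omega)
      have := hall _ hv2
      rw [Nat.odd_iff] at this
      omega
  · intro hnd
    rw [not_and_or] at hnd
    rcases hnd with hnd | hall
    · rw [Multiset.nodup_iff_count_le_one] at hnd
      push_neg at hnd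
      obtain ⟨v, hv⟩ := hnd
      exact ⟨v, mem_F.2 (Or.inl hv)⟩
    · push_neg at hall
      obtain ⟨x, hx, hxo⟩ := hall
      rw [Nat.not_odd_iff_even] at hxo
      obtain ⟨k, hk⟩ := hxo
      have hxk : x = 2 * k := by omega
      have hc : 0 < s.count x := Multiset.count_pos.2 hx
      by_cases ho : Odd (s.count (2 * k))
      · exact ⟨k, mem_F.2 (Or.inr ho)⟩
      · refine ⟨x, mem_F.2 (Or.inl ?_)⟩
        rw [Nat.odd_iff] at ho
        rw [hxk] at hc ⊢
        omega

end VLaux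

open VLaux in
/-- Van Leeuwen: for `n ≥ 2`, among partitions of `n` that do not consist of
distinct odd parts, those of even length are equinumerous with those of odd
length: `r^e(n) = r^o(n)`. -/
theorem vanLeeuwen (n : ℕ) (hn : 2 ≤ n) :
    Fintype.card {μ : Nat.Partition n //
        ¬(μ.parts.Nodup ∧ ∀ x ∈ μ.parts, Odd x) ∧ Even (Multiset.card μ.parts)} =
      Fintype.card {μ : Nat.Partition n //
        ¬(μ.parts.Nodup ∧ ∀ x ∈ μ.parts, Odd x) ∧ Odd (Multiset.card μ.parts)} := by
  classical
  have hpos : ∀ μ : Nat.Partition n, ∀ x ∈ μ.parts, 0 < x := fun μ x hx => μ.parts_pos hx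
  -- the toggle at the level of partitions
  have main : ∀ μ : Nat.Partition n, ¬(μ.parts.Nodup ∧ ∀ x ∈ μ.parts, Odd x) →
      (∀ x ∈ toggleParts μ.parts, 0 < x) ∧ (toggleParts μ.parts).sum = μ.parts.sum ∧
        (F (toggleParts μ.parts)).Nonempty ∧ toggleParts (toggleParts μ.parts) = μ.parts ∧
        (toggleParts μ.parts).card % 2 = (μ.parts.card + 1) % 2 := by
    intro μ hμ
    exact main_step (hpos μ) (F_nonempty_iff.2 hμ)
  let tp : {μ : Nat.Partition n // ¬(μ.parts.Nodup ∧ ∀ x ∈ μ.parts, Odd x)} →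
      {μ : Nat.Partition n // ¬(μ.parts.Nodup ∧ ∀ x ∈ μ.parts, Odd x)} :=
    fun x => ⟨⟨toggleParts x.1.parts, fun hi => (main x.1 x.2).1 _ hi,
        by rw [(main x.1 x.2).2.1, x.1.parts_sum]⟩,
      by
        rw [← F_nonempty_iff]
        exact (main x.1 x.2).2.2.1⟩
  have tp_parts : ∀ x, (tp x).1.parts = toggleParts x.1.parts := fun x => rfl
  have tp_tp : ∀ x, tp (tp x) = x := by
    intro x
    have h1 := (main x.1 x.2).2.2.2.1
    apply Subtype.ext
    apply Nat.Partition.ext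
    rw [tp_parts, tp_parts]
    exact h1
  have tp_card : ∀ x, ((tp x).1.parts).card % 2 = (x.1.parts.card + 1) % 2 := by
    intro x
    rw [tp_parts]
    exact (main x.1 x.2).2.2.2.2
  have key : ∀ (μ : Nat.Partition n) (h1 : ¬(μ.parts.Nodup ∧ ∀ x ∈ μ.parts, Odd x))
      (h2 : ¬(((tp ⟨μ, h1⟩ : {ν : Nat.Partition n //
          ¬(ν.parts.Nodup ∧ ∀ x ∈ ν.parts, Odd x)}) : Nat.Partition n).parts.Nodup ∧
        ∀ x ∈ ((tp ⟨μ, h1⟩ : {ν : Nat.Partition n //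
          ¬(ν.parts.Nodup ∧ ∀ x ∈ ν.parts, Odd x)}) : Nat.Partition n).parts, Odd x)),
      ((tp ⟨(tp ⟨μ, h1⟩).1, h2⟩ : {ν : Nat.Partition n //
          ¬(ν.parts.Nodup ∧ ∀ x ∈ ν.parts, Odd x)}) : Nat.Partition n) = μ := by
    intro μ h1 h2
    have e : (⟨(tp ⟨μ, h1⟩).1, h2⟩ : {ν : Nat.Partition n //
        ¬(ν.parts.Nodup ∧ ∀ x ∈ ν.parts, Odd x)}) = tp ⟨μ, h1⟩ := Subtype.ext rfl
    rw [e, tp_tp]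
  refine Fintype.card_congr ?_
  refine
    { toFun := fun x => ⟨(tp ⟨x.1, x.2.1⟩).1, (tp ⟨x.1, x.2.1⟩).2, ?_⟩
      invFun := fun x => ⟨(tp ⟨x.1, x.2.1⟩).1, (tp ⟨x.1, x.2.1⟩).2, ?_⟩
      left_inv := ?_
      right_inv := ?_ }
  · have h1 := tp_card ⟨x.1, x.2.1⟩
    have h2 : Multiset.card ((⟨x.1, x.2.1⟩ : {μ : Nat.Partition n //
        ¬(μ.parts.Nodup ∧ ∀ x ∈ μ.parts, Odd x)}) : Nat.Partition n).parts
        = Multiset.card x.1.parts := rfl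
    have hx := x.2.2
    rw [Nat.even_iff] at hx
    rw [Nat.odd_iff]
    omega
  · have h1 := tp_card ⟨x.1, x.2.1⟩
    have h2 : Multiset.card ((⟨x.1, x.2.1⟩ : {μ : Nat.Partition n //
        ¬(μ.parts.Nodup ∧ ∀ x ∈ μ.parts, Odd x)}) : Nat.Partition n).parts
        = Multiset.card x.1.parts := rfl
    have hx := x.2.2
    rw [Nat.odd_iff] at hx
    rw [Nat.even_iff]
    omega
  · rintro ⟨μ, hμ, hp⟩
    exact Subtype.ext (key μ hμ _)
  · rintro ⟨μ, hμ, hp⟩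
    exact Subtype.ext (key μ hμ _)
end

section
/- For all n ≥ 1, the number of self-half-conjugate overpartitions in D_2(n) equals the number of partitions of n into distinct parts, i.e., h(n) = q(n). -/
/-- The multiset of parts of the conjugate partition. -/
def conjParts (s : Multiset ℕ) : Multiset ℕ :=
  ((Finset.Icc 1 s.sum).val.map fun i => Multiset.card (s.filter fun j => i ≤ j)).filter
    fun x => 0 < x

/-- `h(n)`: the number of self-half-conjugate overpartitions of `n` wherein only
even parts may be overlined, i.e., pairs `(μ, ν)` with `μ` a self-conjugate
partition, `ν` a partition into distinct even parts, and `|μ| + |ν| = n`. -/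
def selfHalfConj (n : ℕ) : ℕ :=
  ∑ m ∈ Finset.range (n + 1),
    Fintype.card {μ : Nat.Partition m // μ.parts = conjParts μ.parts} *
      Fintype.card {ν : Nat.Partition (n - m) // ν.parts.Nodup ∧ ∀ x ∈ ν.parts, Even x}

/-!
A partition into distinct parts is the union of its odd parts, a partition of some `m` into
distinct odd parts, and its even parts, a partition of `n - m` into distinct even parts. So it
suffices to match self-conjugate partitions of `m` with partitions of `m` into distinct odd parts.
This is done by the diagonal hooks of the Young diagram: the hook of a symmetric diagram at
`(k, k)` has length `2 λₖ - 2k - 1`, where `λₖ` is the length of row `k`; these lengths are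
strictly decreasing odd numbers summing to the size of the diagram, and the diagram is recovered
from them as the union of its first rows with their transpose.
-/

theorem Multiset.sortedGT_sort_of_nodup {s : Multiset ℕ} (hs : s.Nodup) :
    (s.sort (· ≥ ·)).SortedGT :=
  (List.sortedGE_iff_pairwise.mpr (Multiset.pairwise_sort _ _)).sortedGT_of_nodup
    (Multiset.coe_nodup.mp ((Multiset.sort_eq s (· ≥ ·)).symm ▸ hs))

theorem Multiset.filter_odd_add_filter_even (s : Multiset ℕ) :
    s.filter Odd + s.filter Even = s := by
  rw [Multiset.filter_congr fun x _ => (Nat.not_odd_iff_even (n := x)).symm,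
    Multiset.filter_add_not]

theorem Multiset.filter_odd_add_of_odd_of_even {s t : Multiset ℕ} (hs : ∀ x ∈ s, Odd x)
    (ht : ∀ x ∈ t, Even x) : (s + t).filter Odd = s := by
  rw [Multiset.filter_add, Multiset.filter_eq_self.mpr hs,
    Multiset.filter_eq_nil.mpr fun x hx => Nat.not_odd_iff_even.mpr (ht x hx), add_zero]

theorem Multiset.filter_even_add_of_odd_of_even {s t : Multiset ℕ} (hs : ∀ x ∈ s, Odd x)
    (ht : ∀ x ∈ t, Even x) : (s + t).filter Even = t := by
  rw [Multiset.filter_add, Multiset.filter_eq_self.mpr ht,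
    Multiset.filter_eq_nil.mpr fun x hx => Nat.not_even_iff_odd.mpr (hs x hx), zero_add]

theorem StrictAnti.antitone_add_val {n : ℕ} {a : Fin n → ℕ} (ha : StrictAnti a) :
    Antitone fun k => a k + k := by
  rintro ⟨i, hi⟩ ⟨j, hj⟩ (hij : i ≤ j)
  induction j, hij using Nat.le_induction with
  | base => rfl
  | succ j hij ih =>
    have hstep := @ha ⟨j, by omega⟩ ⟨j + 1, hj⟩ (Nat.lt_add_one j)
    have hle := ih (by omega)
    simp only at hstep hle ⊢
    omega

namespace YoungDiagram

variable (Y : YoungDiagram)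

theorem coe_rowLens :
    (Y.rowLens : Multiset ℕ) = (Finset.range (Y.colLen 0)).val.map Y.rowLen := by
  rw [rowLens, ← Multiset.map_coe, Multiset.coe_range, Finset.range_val]

theorem sum_rowLens : Y.rowLens.sum = Y.cells.card := by
  rw [← Multiset.sum_coe, coe_rowLens, ← Finset.sum_eq_multiset_sum,
    Finset.card_eq_sum_card_fiberwise (f := Prod.fst) (t := Finset.range (Y.colLen 0))]
  · simp only [rowLen_eq_card, row]
  · intro c hc
    rw [Finset.mem_coe, Finset.mem_range, ← mem_iff_lt_colLen]
    exact Y.up_left_mem le_rfl c.2.zero_le (by simpa using hc)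

theorem card_filter_lt_rowLens (j : ℕ) :
    Multiset.card ((Y.rowLens : Multiset ℕ).filter (j < ·)) = Y.colLen j := by
  have hrows :
      (Finset.range (Y.colLen 0)).filter (j < Y.rowLen ·) = Finset.range (Y.colLen j) := by
    ext i
    simp only [Finset.mem_filter, Finset.mem_range, ← mem_iff_lt_rowLen, mem_iff_lt_colLen]
    exact ⟨fun h => h.2, fun h => ⟨h.trans_le (Y.colLen_anti 0 j j.zero_le), h⟩⟩
  rw [coe_rowLens, Multiset.filter_map, Multiset.card_map]
  simp only [Function.comp_def]
  rw [← Finset.filter_val, hrows, Finset.card_val, Finset.card_range]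

theorem coe_rowLens_inj {Y Z : YoungDiagram} :
    (Y.rowLens : Multiset ℕ) = Z.rowLens ↔ Y = Z :=
  ⟨fun h => equivListRowLens.injective <| Subtype.ext <|
      (Multiset.coe_eq_coe.mp h).eq_of_sortedGE Y.rowLens_sorted Z.rowLens_sorted,
    fun h => h ▸ rfl⟩

theorem conjParts_rowLens : conjParts Y.rowLens = Y.transpose.rowLens := by
  have hr : Y.rowLen 0 ≤ Y.cells.card :=
    Y.rowLen_eq_card ▸ Finset.card_le_card (Finset.filter_subset _ _)
  have hcols :
      (Finset.range Y.cells.card).filter (0 < Y.colLen ·) = Finset.range (Y.rowLen 0) := by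
    ext j
    simp only [Finset.mem_filter, Finset.mem_range, ← mem_iff_lt_colLen, mem_iff_lt_rowLen]
    exact ⟨fun h => h.2, fun h => ⟨h.trans_le hr, h⟩⟩
  have hIcc : (Finset.Icc 1 Y.cells.card).val = (Finset.range Y.cells.card).val.map (· + 1) := by
    simp only [Nat.Icc_eq_range', Nat.add_sub_cancel, List.range'_eq_map_range,
      ← Multiset.map_coe, add_comm 1, Multiset.coe_range, Finset.range_val]
  rw [conjParts, Multiset.sum_coe, sum_rowLens, hIcc, Multiset.map_map]
  simp only [Function.comp_def, ← Nat.lt_iff_add_one_le, card_filter_lt_rowLens]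
  simp only [Multiset.filter_map, Function.comp_def, ← Finset.filter_val, hcols, coe_rowLens,
    colLen_transpose, rowLen_transpose]

end YoungDiagram

namespace Nat.Partition

variable {m : ℕ}

def toYoungDiagram (μ : Nat.Partition m) : YoungDiagram :=
  .ofRowLens (μ.parts.sort (· ≥ ·)) (List.sortedGE_iff_pairwise.mpr (Multiset.pairwise_sort _ _))

theorem coe_rowLens_toYoungDiagram (μ : Nat.Partition m) :
    (μ.toYoungDiagram.rowLens : Multiset ℕ) = μ.parts := by
  rw [toYoungDiagram, YoungDiagram.rowLens_ofRowLens_eq_self, Multiset.sort_eq]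
  exact fun x hx => μ.parts_pos ((Multiset.mem_sort _).mp hx)

theorem card_cells_toYoungDiagram (μ : Nat.Partition m) : μ.toYoungDiagram.cells.card = m := by
  rw [← YoungDiagram.sum_rowLens, ← Multiset.sum_coe, coe_rowLens_toYoungDiagram, μ.parts_sum]

def equivYoungDiagram (m : ℕ) : Nat.Partition m ≃ {Y : YoungDiagram // Y.cells.card = m} where
  toFun μ := ⟨μ.toYoungDiagram, μ.card_cells_toYoungDiagram⟩
  invFun Y :=
    { parts := Y.1.rowLens
      parts_pos := fun hi => Y.1.pos_of_mem_rowLens _ (Multiset.mem_coe.mp hi)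
      parts_sum := by rw [Multiset.sum_coe, Y.1.sum_rowLens, Y.2] }
  left_inv μ := Nat.Partition.ext μ.coe_rowLens_toYoungDiagram
  right_inv Y := Subtype.ext <| YoungDiagram.coe_rowLens_inj.mp <| coe_rowLens_toYoungDiagram _

theorem parts_eq_conjParts_iff (μ : Nat.Partition m) :
    μ.parts = conjParts μ.parts ↔ μ.toYoungDiagram.transpose = μ.toYoungDiagram := by
  rw [← coe_rowLens_toYoungDiagram, YoungDiagram.conjParts_rowLens,
    YoungDiagram.coe_rowLens_inj, eq_comm]

def selfConjugateEquiv (m : ℕ) :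
    {μ : Nat.Partition m // μ.parts = conjParts μ.parts} ≃
      {Y : YoungDiagram // Y.cells.card = m ∧ Y.transpose = Y} :=
  ((equivYoungDiagram m).subtypeEquiv parts_eq_conjParts_iff).trans
    (Equiv.subtypeSubtypeEquivSubtypeInter _ _)

end Nat.Partition

namespace YoungDiagram

variable (Y : YoungDiagram)

theorem exists_notMem_diag : ∃ k, (k, k) ∉ Y :=
  ⟨Y.colLen 0, fun h => (mem_iff_lt_colLen.mp (Y.up_left_mem le_rfl (Nat.zero_le _) h)).false⟩

def durfee : ℕ := Nat.find Y.exists_notMem_diag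

variable {Y}

theorem lt_durfee_iff {k : ℕ} : k < Y.durfee ↔ (k, k) ∈ Y := by
  rw [durfee, Nat.lt_find_iff]
  exact ⟨fun h => not_not.mp (h k le_rfl), fun h i hi => not_not.mpr (Y.up_left_mem hi hi h)⟩

theorem lt_durfee_iff_lt_rowLen {k : ℕ} : k < Y.durfee ↔ k < Y.rowLen k := by
  rw [lt_durfee_iff, mem_iff_lt_rowLen]

theorem lt_durfee_iff_lt_colLen {k : ℕ} : k < Y.durfee ↔ k < Y.colLen k := by
  rw [lt_durfee_iff, mem_iff_lt_colLen]

theorem cells_filter_min_eq {k : ℕ} (hk : k < Y.durfee) :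
    Y.cells.filter (fun c => min c.1 c.2 = k) =
      {k} ×ˢ Finset.Ico k (Y.rowLen k) ∪ Finset.Ico (k + 1) (Y.colLen k) ×ˢ {k} := by
  ext ⟨i, j⟩
  simp only [Finset.mem_filter, mem_cells, Finset.mem_union, Finset.mem_product,
    Finset.mem_singleton, Finset.mem_Ico]
  rcases le_or_gt i j with hij | hij
  · rw [min_eq_left hij]
    constructor
    · rintro ⟨h, rfl⟩
      exact .inl ⟨rfl, hij, mem_iff_lt_rowLen.mp h⟩
    · rintro (⟨rfl, -, h⟩ | ⟨⟨h, -⟩, rfl⟩)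
      exacts [⟨mem_iff_lt_rowLen.mpr h, rfl⟩, by omega]
  · rw [min_eq_right hij.le]
    constructor
    · rintro ⟨h, rfl⟩
      exact .inr ⟨⟨hij, mem_iff_lt_colLen.mp h⟩, rfl⟩
    · rintro (⟨rfl, h, -⟩ | ⟨⟨-, h⟩, rfl⟩)
      exacts [by omega, ⟨mem_iff_lt_colLen.mpr h, rfl⟩]

variable (Y)

def diagonalHooks : List ℕ :=
  List.ofFn fun k : Fin Y.durfee => Y.rowLen k + Y.colLen k - (2 * k + 1)

@[simp]
theorem length_diagonalHooks : Y.diagonalHooks.length = Y.durfee :=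
  List.length_ofFn

@[simp]
theorem getElem_diagonalHooks {k : ℕ} (hk : k < Y.diagonalHooks.length) :
    Y.diagonalHooks[k] = Y.rowLen k + Y.colLen k - (2 * k + 1) :=
  List.getElem_ofFn _

theorem sortedGT_diagonalHooks : Y.diagonalHooks.SortedGT := by
  refine List.sortedGT_ofFn_iff.mpr fun i j hij => ?_
  have hj := lt_durfee_iff_lt_rowLen.mp j.2
  have hj' := lt_durfee_iff_lt_colLen.mp j.2
  have hr := Y.rowLen_anti i j hij.le
  have hc := Y.colLen_anti i j hij.le
  have : i.val < j.val := hij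
  omega

theorem sum_diagonalHooks : Y.diagonalHooks.sum = Y.cells.card := by
  rw [diagonalHooks, List.sum_ofFn,
    Fin.sum_univ_eq_sum_range (fun k => Y.rowLen k + Y.colLen k - (2 * k + 1)),
    Finset.card_eq_sum_card_fiberwise (f := fun c => min c.1 c.2) (t := Finset.range Y.durfee)]
  · refine Finset.sum_congr rfl fun k hk => ?_
    have hk := Finset.mem_range.mp hk
    rw [cells_filter_min_eq hk, Finset.card_union_of_disjoint, Finset.card_product,
      Finset.card_product, Finset.card_singleton, Nat.card_Ico, Nat.card_Ico]
    · have := lt_durfee_iff_lt_rowLen.mp hk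
      have := lt_durfee_iff_lt_colLen.mp hk
      omega
    · simp only [Finset.disjoint_left, Finset.mem_product, Finset.mem_singleton, Finset.mem_Ico]
      omega
  · rintro ⟨i, j⟩ h
    exact Finset.mem_range.mpr <| lt_durfee_iff.mpr <|
      Y.up_left_mem (min_le_left i j) (min_le_right i j) (by simpa using h)

variable {Y} {Z : YoungDiagram}

theorem colLen_eq_rowLen_of_transpose_eq (hY : Y.transpose = Y) (k : ℕ) :
    Y.colLen k = Y.rowLen k := by
  rw [← rowLen_transpose, hY]

theorem mem_iff_of_transpose_eq (hY : Y.transpose = Y) {i j : ℕ} :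
    (i, j) ∈ Y ↔ max i j < Y.rowLen (min i j) := by
  rcases le_total i j with hij | hij
  · rw [max_eq_right hij, min_eq_left hij, mem_iff_lt_rowLen]
  · rw [max_eq_left hij, min_eq_right hij, mem_iff_lt_colLen,
      colLen_eq_rowLen_of_transpose_eq hY]

theorem odd_of_mem_diagonalHooks (hY : Y.transpose = Y) {x : ℕ} (hx : x ∈ Y.diagonalHooks) :
    Odd x := by
  obtain ⟨k, rfl⟩ := List.mem_ofFn.mp hx
  have := lt_durfee_iff_lt_rowLen.mp k.2
  rw [colLen_eq_rowLen_of_transpose_eq hY]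
  exact ⟨Y.rowLen k - k - 1, by omega⟩

theorem eq_of_diagonalHooks_eq (hY : Y.transpose = Y) (hZ : Z.transpose = Z)
    (h : Y.diagonalHooks = Z.diagonalHooks) : Y = Z := by
  have hd : Y.durfee = Z.durfee := by simpa using congrArg List.length h
  have hrow : ∀ k < Y.durfee, Y.rowLen k = Z.rowLen k := by
    intro k hk
    have hYk := lt_durfee_iff_lt_rowLen.mp hk
    have hZk := lt_durfee_iff_lt_rowLen.mp (hd ▸ hk)
    have hhook := List.getElem_of_eq h (by simpa using hk)
    simp only [getElem_diagonalHooks, colLen_eq_rowLen_of_transpose_eq hY,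
      colLen_eq_rowLen_of_transpose_eq hZ] at hhook
    omega
  ext ⟨i, j⟩
  simp only [mem_cells, mem_iff_of_transpose_eq hY, mem_iff_of_transpose_eq hZ]
  by_cases hk : min i j < Y.durfee
  · rw [hrow _ hk]
  · have hY' := lt_durfee_iff_lt_rowLen.not.mp hk
    have hZ' := lt_durfee_iff_lt_rowLen.not.mp (hd ▸ hk)
    have := min_le_max (a := i) (b := j)
    omega

theorem antitone_half_add_of_odd {l : List ℕ} (hl : l.SortedGT) (hodd : ∀ x ∈ l, Odd x) :
    Antitone fun k : Fin l.length => l[(k : ℕ)] / 2 + k + 1 := by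
  refine Antitone.add_const (StrictAnti.antitone_add_val fun i j hij => ?_) 1
  obtain ⟨a, ha⟩ := hodd l[(i : ℕ)] (List.getElem_mem _)
  obtain ⟨b, hb⟩ := hodd l[(j : ℕ)] (List.getElem_mem _)
  have := hl hij
  simp only [List.get_eq_getElem] at this
  omega

variable {l : List ℕ} (hl : l.SortedGT) (hodd : ∀ x ∈ l, Odd x)

/-- Row `k` has length `l[k] / 2 + k + 1`, so that the diagonal hook at `(k, k)` of the
symmetrization `ofDiagonalHooks` has length `l[k]`. -/
def topRows : YoungDiagram :=
  ofRowLens _ (List.sortedGE_ofFn_iff.mpr (antitone_half_add_of_odd hl hodd))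

theorem mem_topRows {i j : ℕ} :
    (i, j) ∈ topRows hl hodd ↔ ∃ h : i < l.length, j < l[i] / 2 + i + 1 := by
  simp [topRows, mem_ofRowLens]

def ofDiagonalHooks : YoungDiagram := topRows hl hodd ⊔ (topRows hl hodd).transpose

theorem transpose_ofDiagonalHooks :
    (ofDiagonalHooks hl hodd).transpose = ofDiagonalHooks hl hodd := by
  ext ⟨i, j⟩
  simp only [mem_cells, ofDiagonalHooks, mem_transpose, mem_sup, Prod.swap_prod_mk, or_comm]

theorem rowLen_ofDiagonalHooks {k : ℕ} (hk : k < l.length) :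
    (ofDiagonalHooks hl hodd).rowLen k = l[k] / 2 + k + 1 := by
  refine eq_of_forall_lt_iff fun j => ?_
  rw [← mem_iff_lt_rowLen, ofDiagonalHooks, mem_sup, mem_transpose, Prod.swap_prod_mk,
    mem_topRows, mem_topRows]
  refine ⟨?_, fun h => .inl ⟨hk, h⟩⟩
  rintro (⟨_, h⟩ | ⟨hj, -⟩)
  · exact h
  · rcases le_or_gt j k with hjk | hjk
    · omega
    · have := antitone_half_add_of_odd hl hodd
        (show (⟨k, hk⟩ : Fin l.length) ≤ ⟨j, hj⟩ from hjk.le)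
      simp only at this
      omega

theorem durfee_ofDiagonalHooks : (ofDiagonalHooks hl hodd).durfee = l.length := by
  refine eq_of_forall_lt_iff fun k => ?_
  rw [lt_durfee_iff, ofDiagonalHooks, mem_sup, mem_transpose, Prod.swap_prod_mk, or_self,
    mem_topRows]
  exact ⟨fun ⟨h, _⟩ => h, fun h => ⟨h, by omega⟩⟩

theorem diagonalHooks_ofDiagonalHooks : (ofDiagonalHooks hl hodd).diagonalHooks = l := by
  refine List.ext_getElem (by simp [durfee_ofDiagonalHooks]) fun k hk hk' => ?_
  rw [getElem_diagonalHooks, colLen_eq_rowLen_of_transpose_eq (transpose_ofDiagonalHooks hl hodd),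
    rowLen_ofDiagonalHooks hl hodd hk']
  obtain ⟨a, ha⟩ := hodd l[k] (List.getElem_mem _)
  omega

noncomputable def symmetricEquivDistinctOdd (m : ℕ) :
    {Y : YoungDiagram // Y.cells.card = m ∧ Y.transpose = Y} ≃
      {ν : Nat.Partition m // ν.parts.Nodup ∧ ∀ x ∈ ν.parts, Odd x} :=
  Equiv.ofBijective
    (fun Y => ⟨⟨Y.1.diagonalHooks, fun hx => (odd_of_mem_diagonalHooks Y.2.2 hx).pos,
        by rw [Multiset.sum_coe, sum_diagonalHooks, Y.2.1]⟩,
      Y.1.sortedGT_diagonalHooks.nodup, fun _ hx => odd_of_mem_diagonalHooks Y.2.2 hx⟩)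
    ⟨fun Y Z h => Subtype.ext <| eq_of_diagonalHooks_eq Y.2.2 Z.2.2 <|
        (Multiset.coe_eq_coe.mp (congrArg (·.1.parts) h)).eq_of_sortedGE
          Y.1.sortedGT_diagonalHooks.sortedGE Z.1.sortedGT_diagonalHooks.sortedGE,
      fun ν => by
        have hl := Multiset.sortedGT_sort_of_nodup ν.2.1
        have hodd : ∀ x ∈ ν.1.parts.sort (· ≥ ·), Odd x :=
          fun x hx => ν.2.2 x ((Multiset.mem_sort _).mp hx)
        refine ⟨⟨ofDiagonalHooks hl hodd, ?_, transpose_ofDiagonalHooks hl hodd⟩, ?_⟩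
        · rw [← sum_diagonalHooks, diagonalHooks_ofDiagonalHooks, ← Multiset.sum_coe,
            Multiset.sort_eq, ν.1.parts_sum]
        · ext1
          exact Nat.Partition.ext (by simp only [diagonalHooks_ofDiagonalHooks, Multiset.sort_eq])⟩

end YoungDiagram

namespace Nat.Partition

theorem sum_filter_odd_add_sum_filter_even {n : ℕ} (μ : Nat.Partition n) :
    (μ.parts.filter Odd).sum + (μ.parts.filter Even).sum = n := by
  rw [← Multiset.sum_add, Multiset.filter_odd_add_filter_even, μ.parts_sum]

def oddEvenEquiv (n m : ℕ) (hm : m ≤ n) :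
    {μ : Nat.Partition n // μ.parts.Nodup ∧ (μ.parts.filter Odd).sum = m} ≃
      {ν : Nat.Partition m // ν.parts.Nodup ∧ ∀ x ∈ ν.parts, Odd x} ×
      {ν : Nat.Partition (n - m) // ν.parts.Nodup ∧ ∀ x ∈ ν.parts, Even x} where
  toFun μ :=
    (⟨⟨μ.1.parts.filter Odd, fun hx => μ.1.parts_pos (Multiset.mem_of_mem_filter hx), μ.2.2⟩,
        μ.2.1.filter _, fun _ hx => (Multiset.mem_filter.mp hx).2⟩,
      ⟨⟨μ.1.parts.filter Even, fun hx => μ.1.parts_pos (Multiset.mem_of_mem_filter hx),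
          by have := sum_filter_odd_add_sum_filter_even μ.1; omega⟩,
        μ.2.1.filter _, fun _ hx => (Multiset.mem_filter.mp hx).2⟩)
  invFun νs :=
    ⟨⟨νs.1.1.parts + νs.2.1.parts,
        fun hx => (Multiset.mem_add.mp hx).elim νs.1.1.parts_pos νs.2.1.parts_pos,
        by rw [Multiset.sum_add, νs.1.1.parts_sum, νs.2.1.parts_sum]; omega⟩,
      Multiset.nodup_add.mpr ⟨νs.1.2.1, νs.2.2.1, Multiset.disjoint_left.mpr fun hx hx' =>
        Nat.not_even_iff_odd.mpr (νs.1.2.2 _ hx) (νs.2.2.2 _ hx')⟩,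
      by rw [Multiset.filter_odd_add_of_odd_of_even νs.1.2.2 νs.2.2.2, νs.1.1.parts_sum]⟩
  left_inv μ := Subtype.ext <| Nat.Partition.ext <| Multiset.filter_odd_add_filter_even μ.1.parts
  right_inv νs := Prod.ext
    (Subtype.ext <| Nat.Partition.ext <| Multiset.filter_odd_add_of_odd_of_even νs.1.2.2 νs.2.2.2)
    (Subtype.ext <| Nat.Partition.ext <| Multiset.filter_even_add_of_odd_of_even νs.1.2.2 νs.2.2.2)

theorem card_nodup_eq_sum_card_sum_filter_odd (n : ℕ) :
    Fintype.card {μ : Nat.Partition n // μ.parts.Nodup} =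
      ∑ m ∈ Finset.range (n + 1),
        Fintype.card {μ : Nat.Partition n // μ.parts.Nodup ∧ (μ.parts.filter Odd).sum = m} := by
  rw [Fintype.card_subtype, Finset.card_eq_sum_card_fiberwise fun μ _ => Finset.mem_range.mpr
    (Nat.lt_succ_of_le (Nat.le.intro (sum_filter_odd_add_sum_filter_even μ)))]
  simp only [Fintype.card_subtype, Finset.filter_filter]

end Nat.Partition

theorem h_eq_q_general (n : ℕ) :
    selfHalfConj n = Fintype.card {μ : Nat.Partition n // μ.parts.Nodup} := by
  rw [selfHalfConj, Nat.Partition.card_nodup_eq_sum_card_sum_filter_odd]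
  refine Finset.sum_congr rfl fun m hm => ?_
  rw [Fintype.card_congr (Nat.Partition.oddEvenEquiv n m (Finset.mem_range_succ_iff.mp hm)),
    Fintype.card_prod, ← Fintype.card_congr
      ((Nat.Partition.selfConjugateEquiv m).trans (YoungDiagram.symmetricEquivDistinctOdd m))]

/-- For all `n ≥ 1`, `h(n) = q(n)`: the number of self-half-conjugate
overpartitions in `D_2(n)` equals the number of partitions of `n` into distinct
parts. -/
theorem h_eq_q (n : ℕ) (hn : 1 ≤ n) :
    selfHalfConj n = Fintype.card {μ : Nat.Partition n // μ.parts.Nodup} :=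
  h_eq_q_general n
end

section
/- For all n ≥ 0, d^e_2(n) − d^o_2(n) equals (−1)^m if n = m(3m+1)/2 for some integer m, and 0 otherwise. -/
/-- Number of overpartitions of `n` wherein only even parts may be overlined
with an even total number of parts. -/
def d2e (n : ℕ) : ℕ :=
  ∑ m ∈ Finset.range (n + 1),
    Fintype.card {p : Nat.Partition m × Nat.Partition (n - m) //
      p.2.parts.Nodup ∧ (∀ x ∈ p.2.parts, Even x) ∧
        Even (Multiset.card p.1.parts + Multiset.card p.2.parts)}

/-- Number of overpartitions of `n` wherein only even parts may be overlined
with an odd total number of parts. -/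
def d2o (n : ℕ) : ℕ :=
  ∑ m ∈ Finset.range (n + 1),
    Fintype.card {p : Nat.Partition m × Nat.Partition (n - m) //
      p.2.parts.Nodup ∧ (∀ x ∈ p.2.parts, Even x) ∧
        Odd (Multiset.card p.1.parts + Multiset.card p.2.parts)}

/-!
Weighting each pair `(μ, ν)` by `(-1) ^ (ℓ(μ) + ℓ(ν))`, the generating function of
`d^e_2(n) - d^o_2(n)` is
`∏ₖ (1 + qᵏ)⁻¹ · ∏ₖ (1 - q²ᵏ) = ∏ₖ (1 + qᵏ)⁻¹ · ∏ₖ (1 - qᵏ)(1 + qᵏ) = ∏ₖ (1 - qᵏ)`,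
whose coefficients are given by Euler's pentagonal number theorem.
-/

open PowerSeries PowerSeries.WithPiTopology Finset

theorem Finset.card_filter_even_sub_card_filter_odd {α : Type*} (s : Finset α) (f : α → ℕ) :
    (#{x ∈ s | Even (f x)} : ℤ) - #{x ∈ s | Odd (f x)} = ∑ x ∈ s, (-1) ^ f x := by
  classical
  have hsign : ∀ x ∈ s, (-1 : ℤ) ^ f x = if Even (f x) then 1 else -1 := fun x _ ↦ by
    split_ifs with h
    · exact h.neg_one_pow
    · exact (Nat.not_even_iff_odd.1 h).neg_one_pow
  simp_rw [sum_congr rfl hsign, sum_ite, sum_const, Nat.not_even_iff_odd]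
  simp [sub_eq_add_neg]

theorem Multiset.prod_toFinset_ite_and_count_eq_one {α R : Type*} [DecidableEq α] [CommRing R]
    (s : Multiset α) (P : α → Prop) [DecidablePred P] :
    ∏ a ∈ s.toFinset, (if P a ∧ s.count a = 1 then (-1 : R) else 0) =
      if s.Nodup ∧ ∀ a ∈ s, P a then (-1) ^ Multiset.card s else 0 := by
  have hcond : (∀ a ∈ s.toFinset, P a ∧ s.count a = 1) ↔ s.Nodup ∧ ∀ a ∈ s, P a := by
    simp only [Multiset.mem_toFinset, Multiset.nodup_iff_count_le_one]
    constructor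
    · intro h
      refine ⟨fun a ↦ ?_, fun a ha ↦ (h a ha).1⟩
      by_cases ha : a ∈ s
      · exact (h a ha).2.le
      · simp [Multiset.count_eq_zero_of_notMem ha]
    · exact fun h a ha ↦ ⟨h.2 a ha, le_antisymm (h.1 a) (Multiset.one_le_count_iff_mem.2 ha)⟩
  rw [prod_ite_zero, prod_const]
  by_cases h : s.Nodup ∧ ∀ a ∈ s, P a
  · rw [if_pos (hcond.2 h), if_pos h, Multiset.toFinset_card_of_nodup h.1]
  · rw [if_neg (mt hcond.1 h), if_neg h]

namespace Nat.Partition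

variable (R : Type*) [CommRing R]

noncomputable def signedSeries : R⟦X⟧ :=
  PowerSeries.mk fun n ↦ ∑ p : n.Partition, (-1) ^ Multiset.card p.parts

noncomputable def signedEvenDistinctSeries : R⟦X⟧ :=
  PowerSeries.mk fun n ↦ ∑ p : n.Partition with p.parts.Nodup ∧ ∀ x ∈ p.parts, Even x,
    (-1) ^ Multiset.card p.parts

theorem hasProd_signedSeries [TopologicalSpace R] [T2Space R] [IsTopologicalRing R] :
    HasProd (fun i ↦ ∑' j : ℕ, (-X ^ (i + 1) : R⟦X⟧) ^ j) (signedSeries R) := by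
  convert! hasProd_genFun (fun _ c ↦ (-1 : R) ^ c) using 1
  · ext1 i
    have hc : constantCoeff (-X ^ (i + 1) : R⟦X⟧) = 0 := by simp
    rw [(summable_pow_of_constantCoeff_eq_zero hc).tsum_eq_zero_add, pow_zero]
    congr 1
    refine tsum_congr fun j ↦ ?_
    rw [smul_eq_C_mul, map_pow, map_neg, map_one, neg_pow, pow_mul]
  · ext n
    classical
    simp only [signedSeries, coeff_mk, coeff_genFun, Finsupp.prod, Multiset.toFinsupp_support,
      Multiset.toFinsupp_apply, prod_pow_eq_pow_sum, Multiset.toFinset_sum_count_eq]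

theorem hasProd_signedEvenDistinctSeries [TopologicalSpace R] [T2Space R] :
    HasProd (fun i ↦ if Even (i + 1) then 1 - X ^ (i + 1) else (1 : R⟦X⟧))
      (signedEvenDistinctSeries R) := by
  classical
  convert! hasProd_genFun (fun i c ↦ if Even i ∧ c = 1 then (-1 : R) else 0) using 1
  · ext1 i
    rw [tsum_eq_single 0 fun j hj ↦ by simp [hj]]
    by_cases h : Even (i + 1) <;> simp [h, sub_eq_add_neg]
  · ext n
    simp only [signedEvenDistinctSeries, coeff_mk, coeff_genFun, Finsupp.prod,
      Multiset.toFinsupp_support, Multiset.toFinsupp_apply, sum_filter]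
    refine sum_congr rfl fun p _ ↦ ?_
    convert (Multiset.prod_toFinset_ite_and_count_eq_one p.parts Even).symm using 3
    congr!

theorem multipliable_one_add_X_pow [TopologicalSpace R] :
    Multipliable fun i ↦ (1 + X ^ (i + 1) : R⟦X⟧) := by
  nontriviality R
  refine multipliable_one_add_of_tendsto_order_atTop_nhds_top R
    (f := fun i : ℕ ↦ (X : R⟦X⟧) ^ (i + 1)) ?_
  refine ENat.tendsto_nhds_top_iff_natCast_lt.2 fun n ↦ Filter.eventually_atTop.2 ⟨n, fun i hi ↦ ?_⟩
  rw [order_X_pow]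
  exact_mod_cast Nat.lt_succ_of_le hi

theorem signedSeries_mul_signedEvenDistinctSeries :
    signedSeries R * signedEvenDistinctSeries R = pentagonalSeries R := by
  -- The identity does not involve a topology; the discrete one makes `R⟦X⟧` a Hausdorff
  -- topological ring in which the infinite products below converge.
  let _ : TopologicalSpace R := ⊥
  have _ : DiscreteTopology R := ⟨rfl⟩
  have hQ := (multipliable_one_add_X_pow R).hasProd
  have hAQ : signedSeries R * ∏' i, (1 + X ^ (i + 1) : R⟦X⟧) = 1 := by
    refine ((hasProd_signedSeries R).mul hQ).unique ?_
    convert hasProd_one with i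
    rw [← sub_neg_eq_add, tsum_pow_mul_one_sub_of_constantCoeff_eq_zero (by simp)]
  have hPQ : HasProd (fun i ↦ if Even (i + 1) then 1 - X ^ (i + 1) else (1 : R⟦X⟧))
      (pentagonalSeries R * ∏' i, (1 + X ^ (i + 1) : R⟦X⟧)) := by
    rw [← one_mul (_ * _)]
    refine HasProd.even_mul_odd ?_ ?_
    · convert hasProd_one with k
      simp [Nat.not_even_bit1]
    · convert (hasProd_one_sub_X_pow R).mul hQ with k
      rw [if_pos ⟨k + 1, by ring⟩]
      ring
  rw [(hasProd_signedEvenDistinctSeries R).unique hPQ, mul_left_comm, hAQ, mul_one]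

end Nat.Partition

open Nat.Partition in
theorem d2e_sub_d2o_eq_coeff (n : ℕ) :
    (d2e n : ℤ) - d2o n = coeff n (signedSeries ℤ * signedEvenDistinctSeries ℤ) := by
  classical
  rw [coeff_mul, Nat.sum_antidiagonal_eq_sum_range_succ (fun i j ↦ coeff i _ * coeff j _), d2e,
    d2o]
  push_cast
  rw [← sum_sub_distrib]
  refine sum_congr rfl fun m _ ↦ ?_
  simp only [signedSeries, signedEvenDistinctSeries, coeff_mk, Fintype.card_subtype, sum_mul_sum,
    ← pow_add]
  have hfilter : ∀ Q : ℕ → Prop, [DecidablePred Q] →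
      #{p : m.Partition × (n - m).Partition | p.2.parts.Nodup ∧ (∀ x ∈ p.2.parts, Even x) ∧
        Q (Multiset.card p.1.parts + Multiset.card p.2.parts)} =
      #{p ∈ (univ : Finset m.Partition) ×ˢ
          ({q | q.parts.Nodup ∧ ∀ x ∈ q.parts, Even x} : Finset (n - m).Partition) |
        Q (Multiset.card p.1.parts + Multiset.card p.2.parts)} := fun Q _ ↦ by
    rw [← filter_product_right, univ_product_univ, filter_filter]
    simp only [and_assoc]
  rw [hfilter, hfilter, card_filter_even_sub_card_filter_odd, sum_product]

/-- `d^e_2(n) − d^o_2(n)` equals `(−1)^m` if `n = m(3m+1)/2` for some integer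
`m`, and `0` otherwise. -/
theorem d2e_sub_d2o (n : ℕ) :
    (∀ m : ℤ, (n : ℤ) = m * (3 * m + 1) / 2 → (d2e n : ℤ) - d2o n = (-1) ^ m.natAbs) ∧
    ((¬ ∃ m : ℤ, (n : ℤ) = m * (3 * m + 1) / 2) → (d2e n : ℤ) - d2o n = 0) := by
  have hpent : ∀ m : ℤ, (n : ℤ) = m * (3 * m + 1) / 2 ↔ n = pentagonal (-m) := fun m ↦ by
    rw [← Nat.cast_inj (R := ℤ), natCast_pentagonal, show -m * (3 * -m - 1) = m * (3 * m + 1) by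
      ring]
  rw [d2e_sub_d2o_eq_coeff, Nat.Partition.signedSeries_mul_signedEvenDistinctSeries]
  refine ⟨fun m hm ↦ ?_, fun hno ↦ coeff_pentagonalSeries_eq_zero ℤ ?_⟩
  · rw [(hpent m).1 hm, coeff_pentagonalSeries_pentagonal, Int.negOnePow_neg, Int.coe_negOnePow]
  · rintro ⟨k, hk⟩
    exact hno ⟨-k, (hpent (-k)).2 (by rw [neg_neg, hk])⟩
end

section
/- As formal power series modulo 4, ∑_{n≥0} (−1)^n d_2(n) q^n ≡ ∏_{i≥1} (1 − q^i) (mod 4). -/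
/-!
Write `f_k = ∏_{i ≥ 1} (1 - q^{k i})` (`eulerProd R k`). The generating function of `d₂` is
`∏ (1 + q^{2i}) / ∏ (1 - q^i) = f₄ / (f₁ f₂)`. The substitution `q ↦ -q` fixes `f₂` and `f₄`, and
`f₁(q) f₁(-q) = f₂³ / f₄` (split `f₁` into odd and even factors), so
`∑ (-1)^n d₂(n) q^n = f₁ f₄² / f₂⁴`. Finally `(1 - x)⁴ ≡ (1 - x²)² (mod 4)` gives
`f₂⁴ ≡ f₄² (mod 4)`.
The infinite products live in the product topology of `R⟦X⟧`; taking `R = ZMod 4` turns the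
congruences into equalities.
-/

open Filter Finset PowerSeries PowerSeries.WithPiTopology

namespace D2Congruence

theorem powerSeriesMk_d2 {R : Type*} [CommSemiring R] :
    (PowerSeries.mk fun n ↦ (d2 n : R)) =
      (PowerSeries.mk fun n ↦ (Fintype.card n.Partition : R)) * PowerSeries.mk fun n ↦
        (Fintype.card {ν : n.Partition // ν.parts.Nodup ∧ ∀ x ∈ ν.parts, Even x} : R) := by
  ext n
  rw [coeff_mul, Nat.sum_antidiagonal_eq_sum_range_succ_mk]
  simp [d2]

variable {R : Type*} [CommRing R]

theorem coeff_prod_range_one_sub_X_pow_of_le {n N : ℕ} (h : n ≤ N) :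
    coeff n (∏ i ∈ range N, (1 - X ^ (i + 1)) : R⟦X⟧) =
      coeff n (∏ i ∈ range n, (1 - X ^ (i + 1)) : R⟦X⟧) := by
  induction N, h using Nat.le_induction with
  | base => rfl
  | succ N hN ih =>
    rw [prod_range_succ, mul_sub, mul_one, map_sub, coeff_mul_X_pow', if_neg (by omega), sub_zero,
      ih]

variable [TopologicalSpace R]

theorem continuous_rescale [IsTopologicalSemiring R] (a : R) :
    Continuous (rescale a : R⟦X⟧ → R⟦X⟧) := by
  refine continuous_iff_continuousAt.mpr fun f ↦ ?_
  rw [ContinuousAt, tendsto_iff_coeff_tendsto]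
  intro d
  simp only [coeff_rescale]
  exact ((continuous_coeff R d).const_mul _).tendsto f

theorem multipliable_one_add_X_pow_mul {e : ℕ → ℕ} (he : Tendsto e atTop atTop) (g : ℕ → R⟦X⟧) :
    Multipliable fun i ↦ 1 + X ^ e i * g i := by
  refine multipliable_one_add_of_tendsto_order_atTop_nhds_top R ?_
  refine ENat.tendsto_nhds_top_iff_natCast_lt.mpr fun n ↦ ?_
  filter_upwards [he.eventually_gt_atTop n] with i hi
  exact (Nat.cast_lt.mpr hi).trans_le <|
    nat_le_order _ _ fun j hj ↦ by rw [coeff_X_pow_mul', if_neg (by omega)]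

theorem multipliable_one_sub_X_pow_of_tendsto {e : ℕ → ℕ} (he : Tendsto e atTop atTop) :
    Multipliable fun i ↦ (1 : R⟦X⟧) - X ^ e i := by
  have h := multipliable_one_add_X_pow_mul (R := R) he fun _ ↦ -1
  simpa only [mul_neg, mul_one, ← sub_eq_add_neg] using h

theorem multipliable_one_add_X_pow_of_tendsto {e : ℕ → ℕ} (he : Tendsto e atTop atTop) :
    Multipliable fun i ↦ (1 : R⟦X⟧) + X ^ e i := by
  have h := multipliable_one_add_X_pow_mul (R := R) he fun _ ↦ 1
  simpa only [mul_one] using h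

variable (R) in
noncomputable def eulerProd (k : ℕ) : R⟦X⟧ :=
  ∏' i : ℕ, (1 - X ^ (k * (i + 1)))

variable (R) in
noncomputable def oddEulerProd (k : ℕ) : R⟦X⟧ :=
  ∏' i : ℕ, (1 - X ^ (k * (2 * i + 1)))

theorem multipliable_eulerProd {k : ℕ} (hk : 0 < k) :
    Multipliable fun i : ℕ ↦ (1 : R⟦X⟧) - X ^ (k * (i + 1)) :=
  multipliable_one_sub_X_pow_of_tendsto <|
    tendsto_atTop_mono (fun i ↦ show i ≤ _ by nlinarith) tendsto_id

theorem multipliable_oddEulerProd {k : ℕ} (hk : 0 < k) :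
    Multipliable fun i : ℕ ↦ (1 : R⟦X⟧) - X ^ (k * (2 * i + 1)) :=
  multipliable_one_sub_X_pow_of_tendsto <|
    tendsto_atTop_mono (fun i ↦ show i ≤ _ by nlinarith) tendsto_id

variable [T2Space R]

theorem constantCoeff_eulerProd {k : ℕ} (hk : 0 < k) : constantCoeff (eulerProd R k) = 1 := by
  rw [eulerProd, (multipliable_eulerProd hk).map_tprod _ (continuous_constantCoeff R)]
  simp [hk.ne']

theorem coeff_eulerProd_one (n : ℕ) :
    coeff n (eulerProd R 1) = coeff n (∏ i ∈ Icc 1 n, (1 - X ^ i) : R⟦X⟧) := by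
  have h := (continuous_coeff R n).tendsto _ |>.comp
    (multipliable_eulerProd (R := R) one_pos).hasProd.tendsto_prod_nat
  have hconst : ∀ᶠ N in atTop, coeff n (∏ i ∈ range n, (1 - X ^ (1 * (i + 1))) : R⟦X⟧) =
      coeff n (∏ i ∈ range N, (1 - X ^ (1 * (i + 1))) : R⟦X⟧) :=
    eventually_atTop.mpr ⟨n, fun N hN ↦ by
      simpa using (coeff_prod_range_one_sub_X_pow_of_le hN).symm⟩
  rw [eulerProd, ← tendsto_nhds_unique (tendsto_const_nhds.congr' hconst) h, range_eq_Ico]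
  simp only [one_mul]
  rw [prod_Ico_add' (fun i ↦ (1 : R⟦X⟧) - X ^ i), zero_add, Ico_add_one_right_eq_Icc]

theorem hasProd_powerSeriesMk_card_nodup_even :
    HasProd (fun i : ℕ ↦ (1 : R⟦X⟧) + X ^ (2 * (i + 1))) (PowerSeries.mk fun n ↦
      (Fintype.card {ν : n.Partition // ν.parts.Nodup ∧ ∀ x ∈ ν.parts, Even x} : R)) := by
  have h := Nat.Partition.hasProd_genFun (R := R) fun i c ↦ if Even i ∧ c = 1 then 1 else 0
  have hfactor (i : ℕ) : 1 + ∑' j : ℕ, (if Even (i + 1) ∧ j + 1 = 1 then (1 : R) else 0) •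
      (X : R⟦X⟧) ^ ((i + 1) * (j + 1)) = if Even (i + 1) then 1 + X ^ (i + 1) else 1 := by
    rw [tsum_eq_single 0 fun j hj ↦ by simp [hj]]
    split_ifs <;> simp_all
  have hgen : Nat.Partition.genFun (fun i c ↦ if Even i ∧ c = 1 then (1 : R) else 0) =
      PowerSeries.mk fun n ↦
        (Fintype.card {ν : n.Partition // ν.parts.Nodup ∧ ∀ x ∈ ν.parts, Even x} : R) := by
    ext n
    simp only [Nat.Partition.coeff_genFun, Finsupp.prod, prod_boole, coeff_mk, sum_boole,
      Fintype.card_subtype]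
    congr 2
    ext p
    simp only [Multiset.toFinsupp_support, Multiset.mem_toFinset, Multiset.toFinsupp_apply,
      Multiset.nodup_iff_count_eq_one, forall_and, mem_filter, mem_univ, true_and]
    tauto
  simp only [hfactor, hgen] at h
  -- only the factors with odd index `i = 2 j + 1` differ from `1`
  rw [← Function.Injective.hasProd_iff (g := fun j ↦ 2 * j + 1)
    (fun a b hab ↦ by simp only at hab; omega)
    fun i hi ↦ if_neg fun ⟨m, hm⟩ ↦ hi ⟨m - 1, show 2 * (m - 1) + 1 = i by omega⟩] at h
  have hterm : ((fun i : ℕ ↦ if Even (i + 1) then (1 : R⟦X⟧) + X ^ (i + 1) else 1) ∘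
      fun j ↦ 2 * j + 1) = fun j ↦ 1 + X ^ (2 * (j + 1)) :=
    funext fun j ↦ if_pos ⟨j + 1, by ring⟩ |>.trans (by ring_nf)
  rwa [hterm] at h

variable [IsTopologicalRing R]

theorem powerSeriesMk_card_partition_mul_eulerProd_one :
    (PowerSeries.mk fun n ↦ (Fintype.card n.Partition : R)) * eulerProd R 1 = 1 := by
  have h := Nat.Partition.hasProd_powerSeriesMk_card_restricted R (fun _ ↦ True)
  simp only [if_true] at h
  have hcard (n : ℕ) : #(Nat.Partition.restricted n fun _ ↦ True) = Fintype.card n.Partition := by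
    simp [Nat.Partition.restricted]
  simp only [hcard] at h
  rw [← h.tprod_eq, eulerProd, ← h.multipliable.tprod_mul (multipliable_eulerProd one_pos)]
  refine (tprod_congr fun i ↦ ?_).trans tprod_one
  simp_rw [one_mul, pow_mul]
  exact tsum_pow_mul_one_sub_of_constantCoeff_eq_zero (by simp)

theorem eulerProd_eq_oddEulerProd_mul {k : ℕ} (hk : 0 < k) :
    eulerProd R k = oddEulerProd R k * eulerProd R (2 * k) := by
  have ho : Multipliable fun i : ℕ ↦ (1 : R⟦X⟧) - X ^ (k * (2 * i + 1 + 1)) :=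
    multipliable_one_sub_X_pow_of_tendsto <|
      tendsto_atTop_mono (fun i ↦ show i ≤ _ by nlinarith) tendsto_id
  rw [eulerProd, eulerProd, oddEulerProd, ← tprod_even_mul_odd
    (f := fun i ↦ (1 : R⟦X⟧) - X ^ (k * (i + 1))) (multipliable_oddEulerProd hk) ho]
  exact congrArg _ <| tprod_congr fun i ↦ by ring_nf

theorem rescale_neg_one_eulerProd_two :
    rescale (-1) (eulerProd R 2) = eulerProd R 2 := by
  rw [eulerProd, (multipliable_eulerProd two_pos).map_tprod _ (continuous_rescale _)]
  exact tprod_congr fun i ↦ by simp [pow_mul]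

theorem eulerProd_one_mul_rescale_neg_one :
    eulerProd R 1 * rescale (-1) (eulerProd R 1) = oddEulerProd R 2 * eulerProd R 2 ^ 2 := by
  have hO : Multipliable fun i : ℕ ↦ (1 : R⟦X⟧) + X ^ (2 * i + 1) :=
    multipliable_one_add_X_pow_of_tendsto <|
      tendsto_atTop_mono (fun i ↦ show i ≤ _ by nlinarith) tendsto_id
  have hrescale : rescale (-1) (oddEulerProd R 1) = ∏' i : ℕ, (1 + X ^ (2 * i + 1) : R⟦X⟧) := by
    rw [oddEulerProd, (multipliable_oddEulerProd one_pos).map_tprod _ (continuous_rescale _)]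
    exact tprod_congr fun i ↦ by simp [(odd_two_mul_add_one i).neg_pow]
  have hodd : oddEulerProd R 1 * ∏' i : ℕ, (1 + X ^ (2 * i + 1) : R⟦X⟧) = oddEulerProd R 2 := by
    rw [oddEulerProd, ← (multipliable_oddEulerProd one_pos).tprod_mul hO, oddEulerProd]
    exact tprod_congr fun i ↦ by ring
  rw [eulerProd_eq_oddEulerProd_mul one_pos, mul_one, map_mul, hrescale,
    rescale_neg_one_eulerProd_two, ← hodd]
  ring

theorem tprod_one_add_X_pow_two_mul_mul_eulerProd_two :
    (∏' i : ℕ, (1 + X ^ (2 * (i + 1)) : R⟦X⟧)) * eulerProd R 2 = eulerProd R 4 := by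
  rw [eulerProd, ← (hasProd_powerSeriesMk_card_nodup_even (R := R)).multipliable.tprod_mul
    (multipliable_eulerProd two_pos), eulerProd]
  exact tprod_congr fun i ↦ by ring

theorem rescale_neg_one_tprod_one_add_X_pow_two_mul :
    rescale (-1) (∏' i : ℕ, (1 + X ^ (2 * (i + 1)) : R⟦X⟧)) =
      ∏' i : ℕ, (1 + X ^ (2 * (i + 1))) := by
  rw [(hasProd_powerSeriesMk_card_nodup_even (R := R)).multipliable.map_tprod _
    (continuous_rescale _)]
  exact tprod_congr fun i ↦ by simp [pow_mul]

theorem eulerProd_two_pow_four (h4 : (4 : R) = 0) : eulerProd R 2 ^ 4 = eulerProd R 4 ^ 2 := by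
  have h4' : (4 : R⟦X⟧) = 0 := by rw [← map_ofNat C 4, h4, map_zero]
  rw [eulerProd, eulerProd, ← (multipliable_eulerProd two_pos).tprod_pow,
    ← (multipliable_eulerProd four_pos).tprod_pow]
  exact tprod_congr fun i ↦ by
    linear_combination (-(X : R⟦X⟧) ^ (2 * (i + 1)) * (1 - X ^ (2 * (i + 1))) ^ 2) * h4'

theorem alternating_d2_mul_eulerProd_two_pow_four :
    (PowerSeries.mk fun n ↦ (-1) ^ n * (d2 n : R)) * eulerProd R 2 ^ 4 =
      eulerProd R 1 * eulerProd R 4 ^ 2 := by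
  have hd2 : (PowerSeries.mk fun n ↦ (-1) ^ n * (d2 n : R)) =
      rescale (-1) (PowerSeries.mk fun n ↦ (Fintype.card n.Partition : R)) *
        ∏' i : ℕ, (1 + X ^ (2 * (i + 1))) := by
    rw [← rescale_neg_one_tprod_one_add_X_pow_two_mul, ← map_mul,
      hasProd_powerSeriesMk_card_nodup_even.tprod_eq, ← powerSeriesMk_d2, rescale_mk]
  set P : R⟦X⟧ := PowerSeries.mk fun n ↦ (Fintype.card n.Partition : R)
  set D : R⟦X⟧ := ∏' i : ℕ, (1 + X ^ (2 * (i + 1)))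
  have hP : rescale (-1) P * rescale (-1) (eulerProd R 1) = 1 := by
    rw [← map_mul, powerSeriesMk_card_partition_mul_eulerProd_one, map_one]
  have hE1 := eulerProd_one_mul_rescale_neg_one (R := R)
  have hE2 := eulerProd_eq_oddEulerProd_mul (R := R) two_pos
  have hD := tprod_one_add_X_pow_two_mul_mul_eulerProd_two (R := R)
  rw [hd2]
  linear_combination (rescale (-1) P * D * eulerProd R 2 ^ 3) * hE2
    - (rescale (-1) P * D * eulerProd R 2 * eulerProd R 4) * hE1
    + (D * eulerProd R 2 * eulerProd R 4 * eulerProd R 1) * hP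
    + (eulerProd R 4 * eulerProd R 1) * hD

theorem alternating_d2_eq_eulerProd_one (h4 : (4 : R) = 0) :
    (PowerSeries.mk fun n ↦ (-1) ^ n * (d2 n : R)) = eulerProd R 1 := by
  have hunit : IsUnit (eulerProd R 4 ^ 2) := by
    refine (isUnit_iff_constantCoeff.mpr ?_).pow 2
    rw [constantCoeff_eulerProd four_pos]
    exact isUnit_one
  refine hunit.mul_right_cancel ?_
  rw [← alternating_d2_mul_eulerProd_two_pow_four, eulerProd_two_pow_four h4]

end D2Congruence

/-- The coefficient of `q^n` in `∏_{i≥1} (1 − q^i)` only involves the factors with `i ≤ n`. -/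
theorem alt_d2_congruent_euler :
    ∀ n : ℕ,
      (4 : ℤ) ∣
        PowerSeries.coeff (R := ℤ) n
          ((PowerSeries.mk fun k => (-1) ^ k * (d2 k : ℤ)) -
            ∏ i ∈ Finset.Icc 1 n, (1 - (PowerSeries.X : PowerSeries ℤ) ^ i)) := by
  intro n
  refine (ZMod.intCast_zmod_eq_zero_iff_dvd _ 4).mp ?_
  have hmap : PowerSeries.map (Int.castRingHom (ZMod 4))
      (PowerSeries.mk fun k ↦ (-1) ^ k * (d2 k : ℤ)) =
        PowerSeries.mk fun k ↦ (-1) ^ k * (d2 k : ZMod 4) := by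
    ext k
    simp
  rw [← eq_intCast (Int.castRingHom (ZMod 4)), ← coeff_map]
  simp only [map_sub, map_prod, map_one, map_pow, map_X, hmap]
  rw [D2Congruence.alternating_d2_eq_eulerProd_one (by decide), D2Congruence.coeff_eulerProd_one,
    sub_self]
end
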